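/- arXiv:2602.07686 — 4 statements merged into one kernel-verified Lean document; each statement's English description precedes it below -/
import Mathlib

section
/- Let (X, τ, 𝔞) be an aura space. If X is 𝔞-compact, then X is 𝔞-limit point compact: every infinite subset of X has an 𝔞-limit point in X. -/
/-- The aura topology `τ_𝔞` generated by a scope function `𝔞 : X → Set X`:
a set `U` is `𝔞`-open iff `𝔞 x ⊆ U` for every `x ∈ U`. -/
def auraTopology {X : Type*} (a : X → Set X) : TopologicalSpace X where
  IsOpen U := ∀ x ∈ U, a x ⊆ U
  isOpen_univ := fun _ _ => Set.subset_univ _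
  isOpen_inter := fun _ _ hU hV x hx => Set.subset_inter (hU x hx.1) (hV x hx.2)
  isOpen_sUnion := fun S hS x hx => by
    obtain ⟨U, hU, hxU⟩ := hx
    exact (hS U hU x hxU).trans (Set.subset_sUnion_of_mem hU)

/-- A set `U ⊆ X` is `𝔞`-open iff `𝔞 x ⊆ U` for every `x ∈ U`. -/
def AuraOpen {X : Type*} (a : X → Set X) (U : Set X) : Prop := ∀ x ∈ U, a x ⊆ U

/-- every `𝔞`-compact space is `𝔞`-limit point compact: each infinite
subset has an `𝔞`-limit point. -/
theorem stmt6 {X : Type*} [TopologicalSpace X] (a : X → Set X)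
    (ha_open : ∀ x, IsOpen (a x)) (ha_mem : ∀ x, x ∈ a x)
    (hX : @IsCompact X (auraTopology a) Set.univ) :
    ∀ A : Set X, A.Infinite → ∃ x : X, (a x ∩ (A \ {x})).Nonempty := by
  intro A hA
  by_contra h
  push_neg at h
  have key : ∀ x, a x ∩ A ⊆ {x} := by
    intro x y hy
    by_contra hne
    exact Set.eq_empty_iff_forall_notMem.mp (h x) y ⟨hy.1, hy.2, hne⟩
  have hopen : ∀ B ⊆ A, @IsOpen X (auraTopology a) Bᶜ := by
    intro B hB
    show ∀ x ∈ Bᶜ, a x ⊆ Bᶜ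
    intro x hx y hy hyB
    exact hx (key x ⟨hy, hB hyB⟩ ▸ hyB)
  have hAcomp : @IsCompact X (auraTopology a) A :=
    @IsCompact.of_isClosed_subset X (auraTopology a) Set.univ A hX
      (@IsClosed.mk X (auraTopology a) A (hopen A subset_rfl)) (Set.subset_univ A)
  obtain ⟨t, ht⟩ := @IsCompact.elim_finite_subcover X (auraTopology a) A X hAcomp
    (fun y => (A \ {y})ᶜ)
    (fun y => hopen (A \ {y}) Set.diff_subset)
    (fun z hz => Set.mem_iUnion.mpr ⟨z, fun hzd => hzd.2 rfl⟩)
  apply hA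
  apply Set.Finite.subset t.finite_toSet
  intro z hz
  obtain ⟨y, hyt, hzy⟩ := Set.mem_iUnion₂.mp (ht hz)
  have : z = y := by by_contra hne; exact hzy ⟨hz, hne⟩
  exact this ▸ hyt
end

section
/- Let (X, τ, 𝔞) be an aura space and Y ⊆ X a nonempty subset with subspace aura space (Y, τ_Y, 𝔞_Y). Then the subspace topology on Y induced by τ_𝔞 is contained in τ_{𝔞_Y}: (τ_𝔞)_Y ⊆ τ_{𝔞_Y}. Moreover, if 𝔞 is transitive, then (τ_𝔞)_Y = τ_{𝔞_Y}. -/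
/-- for the subspace aura space on `Y ⊆ X` (scope
`𝔞_Y(y) = 𝔞(y) ∩ Y`), the subspace topology induced by `τ_𝔞` is contained in
`τ_(𝔞_Y)`, with equality when `𝔞` is transitive.  (In Mathlib's order on
topologies, `t ≤ s` means `t` has at least the open sets of `s`.) -/
theorem stmt15 {X : Type*} [TopologicalSpace X] (a : X → Set X)
    (ha_open : ∀ x, IsOpen (a x)) (ha_mem : ∀ x, x ∈ a x)
    (Y : Set X) (hY : Y.Nonempty) :
    (auraTopology (fun y : Y => (Subtype.val ⁻¹' a ↑y : Set Y)) ≤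
      TopologicalSpace.induced (Subtype.val : Y → X) (auraTopology a)) ∧
    ((∀ x y : X, y ∈ a x → a y ⊆ a x) →
      auraTopology (fun y : Y => (Subtype.val ⁻¹' a ↑y : Set Y)) =
        TopologicalSpace.induced (Subtype.val : Y → X) (auraTopology a)) := by
  have hle : auraTopology (fun y : Y => (Subtype.val ⁻¹' a ↑y : Set Y)) ≤
      TopologicalSpace.induced (Subtype.val : Y → X) (auraTopology a) := by
    intro V hV
    obtain ⟨U, hU, rfl⟩ := hV
    intro y hy z hz
    exact hU _ hy hz
  refine ⟨hle, fun htr => le_antisymm hle ?_⟩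
  intro V hV
  refine ⟨⋃ y ∈ V, a ↑y, ?_, ?_⟩
  · intro x hx
    simp only [Set.mem_iUnion] at hx
    obtain ⟨y, hy, hxy⟩ := hx
    intro z hz
    exact Set.mem_iUnion₂.mpr ⟨y, hy, htr _ _ hxy hz⟩
  · ext z
    simp only [Set.mem_preimage, Set.mem_iUnion]
    constructor
    · rintro ⟨y, hy, hz⟩
      exact hV y hy hz
    · intro hz
      exact ⟨z, hz, ha_mem _⟩
end

section
/- Let (X, τ_X, 𝔞) and (Y, τ_Y, 𝔟) be aura spaces and (X × Y, τ_X × τ_Y, 𝔞 × 𝔟) the product aura space. Then the following inclusions of topologies on X × Y hold: (τ_𝔞) × (τ_𝔟) ⊆ τ_{𝔞×𝔟} ⊆ τ_X × τ_Y, where (τ_𝔞) × (τ_𝔟) and τ_X × τ_Y denote product topologies. -/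
/-- the inclusion chain of topologies on `X × Y`:
`(τ_𝔞) × (τ_𝔟) ⊆ τ_(𝔞×𝔟) ⊆ τ_X × τ_Y`.  (In Mathlib's order on topologies,
`t ≤ s` means every `s`-open set is `t`-open.) -/
theorem stmt17 {X Y : Type*} [TopologicalSpace X] [TopologicalSpace Y] (a : X → Set X)
    (ha_open : ∀ x, IsOpen (a x)) (ha_mem : ∀ x, x ∈ a x)
    (b : Y → Set Y)
    (hb_open : ∀ y, IsOpen (b y)) (hb_mem : ∀ y, y ∈ b y) :
    (auraTopology (fun p : X × Y => a p.1 ×ˢ b p.2) ≤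
      @instTopologicalSpaceProd X Y (auraTopology a) (auraTopology b)) ∧
    ((instTopologicalSpaceProd : TopologicalSpace (X × Y)) ≤
      auraTopology (fun p : X × Y => a p.1 ×ˢ b p.2)) := by
  constructor
  · show auraTopology _ ≤
      TopologicalSpace.induced Prod.fst (auraTopology a) ⊓
      TopologicalSpace.induced Prod.snd (auraTopology b)
    refine le_inf ?_ ?_
    · rw [TopologicalSpace.le_def]
      rintro U ⟨V, hV, rfl⟩ p hp q hq
      exact hV p.1 hp (hq.1)
    · rw [TopologicalSpace.le_def]
      rintro U ⟨V, hV, rfl⟩ p hp q hq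
      exact hV p.2 hp (hq.2)
  · rw [TopologicalSpace.le_def]
    intro U hU
    rw [isOpen_iff_forall_mem_open]
    intro p hp
    exact ⟨a p.1 ×ˢ b p.2, hU p hp, (ha_open p.1).prod (hb_open p.2),
      Set.mk_mem_prod (ha_mem p.1) (hb_mem p.2)⟩
end

section
/- Let (X, τ_X, 𝔞) and (Y, τ_Y, 𝔟) be aura spaces. If X is 𝔞-connected and Y is 𝔟-connected, then the product aura space X × Y is (𝔞 × 𝔟)-connected, i.e., X × Y is connected in the topology τ_{𝔞×𝔟}. -/
/-- if `X` is `𝔞`-connected and `Y` is `𝔟`-connected, then `X × Y`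
is `(𝔞 × 𝔟)`-connected, i.e. it admits no separation in the topology `τ_(𝔞×𝔟)`. -/
theorem stmt19 {X Y : Type*} [TopologicalSpace X] [TopologicalSpace Y] (a : X → Set X)
    (ha_open : ∀ x, IsOpen (a x)) (ha_mem : ∀ x, x ∈ a x)
    (b : Y → Set Y)
    (hb_open : ∀ y, IsOpen (b y)) (hb_mem : ∀ y, y ∈ b y)
    (hX : @PreconnectedSpace X (auraTopology a))
    (hY : @PreconnectedSpace Y (auraTopology b)) :
    @PreconnectedSpace (X × Y) (auraTopology (fun p : X × Y => a p.1 ×ˢ b p.2)) := by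
  set tP := auraTopology (fun p : X × Y => a p.1 ×ˢ b p.2) with htP
  -- continuity of the slice inclusions
  have hcont1 : ∀ x : X, @Continuous Y (X × Y) (auraTopology b) tP (fun y => (x, y)) := by
    intro x
    rw [@continuous_def]
    intro U hU
    intro y hy z hz
    exact hU (x, y) hy ⟨ha_mem x, hz⟩
  have hcont2 : ∀ y : Y, @Continuous X (X × Y) (auraTopology a) tP (fun x => (x, y)) := by
    intro y
    rw [@continuous_def]
    intro U hU
    intro x hx z hz
    exact hU (x, y) hx ⟨hz, hb_mem y⟩
  refine @PreconnectedSpace.mk (X × Y) tP ?_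
  refine @isPreconnected_of_forall_pair (X × Y) tP _ ?_
  rintro ⟨x₁, y₁⟩ - ⟨x₂, y₂⟩ -
  refine ⟨(fun y => (x₁, y)) '' Set.univ ∪ (fun x => (x, y₂)) '' Set.univ,
    Set.subset_univ _, Or.inl ⟨y₁, trivial, rfl⟩, Or.inr ⟨x₂, trivial, rfl⟩, ?_⟩
  have h1 : @IsPreconnected (X × Y) tP ((fun y => (x₁, y)) '' Set.univ) :=
    @IsPreconnected.image Y (X × Y) (auraTopology b) tP _
      (@PreconnectedSpace.isPreconnected_univ Y (auraTopology b) hY) _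
      (@Continuous.continuousOn Y (X × Y) (auraTopology b) tP _ _ (hcont1 x₁))
  have h2 : @IsPreconnected (X × Y) tP ((fun x => (x, y₂)) '' Set.univ) :=
    @IsPreconnected.image X (X × Y) (auraTopology a) tP _
      (@PreconnectedSpace.isPreconnected_univ X (auraTopology a) hX) _
      (@Continuous.continuousOn X (X × Y) (auraTopology a) tP _ _ (hcont2 y₂))
  exact @IsPreconnected.union (X × Y) tP (x₁, y₂) _ _ ⟨y₂, trivial, rfl⟩ ⟨x₁, trivial, rfl⟩ h1 h2
end
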